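/- arXiv:2204.00181 — 5 statements merged into one kernel-verified Lean document; each statement's English description precedes it below -/
import Mathlib

section
/- Let F = ∪_{i=1}^k S_{d_i} be a star forest with k ≥ 2 and d_1 ≥ ⋯ ≥ d_k ≥ 1, where S_d denotes the star with d edges. If G is an F-free graph of order n ≥ Σ_{i=1}^k d_i + k, then e(G) ≤ (1/2)(Σ_{i=1}^k d_i + 2k - 3)·n - (1/2)(k-1)(Σ_{i=1}^k d_i + k - 1). -/
open SimpleGraph

attribute [local instance] Classical.propDecidable

/-- The star forest `⋃ i, S_(d i)`; in component `i` the vertex `0` is the center. -/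
def starForest (k : ℕ) (d : Fin k → ℕ) : SimpleGraph (Σ i : Fin k, Fin (d i + 1)) where
  Adj x y := x.1 = y.1 ∧ x ≠ y ∧ ((x.2 : ℕ) = 0 ∨ (y.2 : ℕ) = 0)
  symm := by constructor; rintro x y ⟨h1, h2, h3⟩; exact ⟨h1.symm, h2.symm, h3.symm⟩
  loopless := by constructor; rintro x ⟨_, h, _⟩; exact h rfl

/-- `G` contains a copy of `F` as a subgraph. -/
def Contains {V W : Type*} (G : SimpleGraph V) (F : SimpleGraph W) : Prop :=
  ∃ f : W ↪ V, ∀ ⦃a b⦄, F.Adj a b → G.Adj (f a) (f b)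

/-!
If `k` distinct vertices each had degree at least `∑ dᵢ + k - 1`, each would still have at least
`∑ dᵢ` neighbours outside these `k` vertices, so Hall's theorem would give pairwise disjoint leaf
sets and hence a copy of `F`. So fewer than `k` vertices have degree above `r = ∑ dᵢ + k - 2`.
Summing degrees, with `n - 1` for these vertices and `r ≤ n - 2` for the others, gives the bound.
-/

open Finset

theorem exists_injective_forall_mem_of_card_le {ι α : Type*} [Fintype ι] [DecidableEq α]
    (t : ι → Finset α) (ht : ∀ i, Fintype.card ι ≤ #(t i)) :
    ∃ f : ι → α, Function.Injective f ∧ ∀ i, f i ∈ t i := by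
  refine (all_card_le_biUnion_card_iff_exists_injective t).mp fun s => ?_
  obtain rfl | ⟨i, hi⟩ := s.eq_empty_or_nonempty
  · simp
  · exact (card_le_univ s).trans ((ht i).trans (card_le_card (subset_biUnion_of_mem t hi)))

-- Vertex `0` of star `i` is its center and vertex `j + 1` is its leaf `j`.
def starForestSplit {k : ℕ} {d : Fin k → ℕ} (x : Σ i, Fin (d i + 1)) :
    Fin k ⊕ Σ i, Fin (d i) :=
  Fin.cases (Sum.inl x.1) (fun j => Sum.inr ⟨x.1, j⟩) x.2

theorem starForestSplit_injective {k : ℕ} {d : Fin k → ℕ} :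
    Function.Injective (starForestSplit (d := d)) := by
  rintro ⟨i, a⟩ ⟨j, b⟩ h
  cases a using Fin.cases <;> cases b using Fin.cases <;>
    simp only [starForestSplit, Fin.cases_zero, Fin.cases_succ, Sum.inl.injEq, Sum.inr.injEq,
      reduceCtorEq, Sigma.mk.injEq] at h
  · rw [h]
  · obtain ⟨rfl, h⟩ := h
    rw [eq_of_heq h]

theorem contains_starForest_of_injective {V : Type*} (G : SimpleGraph V) {k : ℕ}
    {d : Fin k → ℕ} (center : Fin k → V) (leaf : (Σ i, Fin (d i)) → V)
    (hinj : Function.Injective (Sum.elim center leaf)) (hadj : ∀ x, G.Adj (center x.1) (leaf x)) :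
    Contains G (starForest k d) := by
  refine ⟨⟨_, hinj.comp starForestSplit_injective⟩, ?_⟩
  rintro ⟨i, a⟩ ⟨j, b⟩ ⟨rfl, hne, h0⟩
  cases a using Fin.cases <;> cases b using Fin.cases
  · exact absurd rfl hne
  · exact hadj ⟨i, _⟩
  · exact (hadj ⟨i, _⟩).symm
  · simp at h0

theorem contains_starForest_of_degree {V : Type*} [Fintype V] (G : SimpleGraph V) {k : ℕ}
    {d : Fin k → ℕ} (center : Fin k ↪ V) (hdeg : ∀ i, ∑ j, d j + k ≤ G.degree (center i) + 1) :
    Contains G (starForest k d) := by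
  obtain ⟨leaf, hinj, hleaf⟩ := exists_injective_forall_mem_of_card_le
    (fun x : Σ i, Fin (d i) => G.neighborFinset (center x.1) \ univ.map center) fun x => by
      -- The center is itself one of the centers, so it can be added to its neighbourhood for free.
      have hsdiff : G.neighborFinset (center x.1) \ univ.map center
          = insert (center x.1) (G.neighborFinset (center x.1)) \ univ.map center := by
        rw [insert_sdiff_of_mem _ (mem_map_of_mem _ (mem_univ _))]
      have := le_card_sdiff (univ.map center) (insert (center x.1) (G.neighborFinset (center x.1)))
      rw [card_insert_of_notMem (G.notMem_neighborFinset_self _), card_neighborFinset_eq_degree,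
        card_map, card_univ, Fintype.card_fin] at this
      simp only [hsdiff, Fintype.card_sigma, Fintype.card_fin]
      have := hdeg x.1
      omega
  simp only [mem_sdiff, mem_neighborFinset, mem_map, mem_univ, true_and, not_exists] at hleaf
  exact contains_starForest_of_injective G center leaf
    (center.injective.sumElim hinj fun i x => (hleaf x).2 i) fun x => (hleaf x).1

theorem card_filter_le_degree_add_one_lt_of_not_contains {V : Type*} [Fintype V] (G : SimpleGraph V) {k : ℕ}
    {d : Fin k → ℕ} (hfree : ¬ Contains G (starForest k d)) :
    #{v | ∑ j, d j + k ≤ G.degree v + 1} < k := by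
  by_contra! h
  obtain ⟨e⟩ := Function.Embedding.nonempty_of_card_le (α := Fin k)
    (β := {v // v ∈ ({v | ∑ j, d j + k ≤ G.degree v + 1} : Finset V)})
    (by rwa [Fintype.card_coe, Fintype.card_fin])
  exact hfree (contains_starForest_of_degree G (e.trans (Function.Embedding.subtype _))
    fun i => (mem_filter.mp (e i).2).2)

theorem two_mul_card_edgeFinset_le {V : Type*} [Fintype V] (G : SimpleGraph V) (r : ℝ) :
    2 * (#G.edgeFinset : ℝ) ≤ #{v | r < G.degree v} * (Fintype.card V - 1)
      + (Fintype.card V - #{v | r < G.degree v}) * r := by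
  have hhigh : ∑ v with r < G.degree v, (G.degree v : ℝ)
      ≤ #{v | r < G.degree v} • ((Fintype.card V : ℝ) - 1) :=
    sum_le_card_nsmul _ _ _ fun v _ => by
      have := G.degree_lt_card_verts v
      rw [le_sub_iff_add_le]; exact_mod_cast this
  have hlow : ∑ v with ¬ r < G.degree v, (G.degree v : ℝ) ≤ #{v | ¬ r < G.degree v} • r :=
    sum_le_card_nsmul _ _ _ fun v hv => not_lt.mp (mem_filter.mp hv).2
  have hcard : (Fintype.card V : ℝ) - #{v | r < G.degree v} = #{v | ¬ r < G.degree v} := by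
    rw [sub_eq_iff_eq_add']
    exact_mod_cast (card_filter_add_card_filter_not (s := univ) fun v => r < G.degree v).symm
  rw [← Nat.cast_ofNat, ← Nat.cast_mul, ← G.sum_degrees_eq_twice_card_edges, Nat.cast_sum,
    ← sum_filter_add_sum_filter_not _ fun v => r < G.degree v, hcard]
  simp only [nsmul_eq_mul] at hhigh hlow
  linarith

theorem stmt5_general (k n : ℕ) (d : Fin k → ℕ)
    (hn : ∑ i, d i + k ≤ n)
    (G : SimpleGraph (Fin n)) (hfree : ¬ Contains G (starForest k d)) :
    (G.edgeFinset.card : ℝ) ≤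
      (1 / 2) * ((∑ i, (d i : ℝ)) + 2 * k - 3) * n
        - (1 / 2) * ((k : ℝ) - 1) * ((∑ i, (d i : ℝ)) + k - 1) := by
  set r : ℝ := (∑ i, (d i : ℝ)) + k - 2
  have hthreshold : ∀ m : ℕ, r < m ↔ ∑ i, d i + k ≤ m + 1 := fun m => by
    rw [← Nat.lt_succ_iff, ← Nat.cast_lt (α := ℝ)]
    push_cast
    constructor <;> intro h <;> linarith
  have hedges := two_mul_card_edgeFinset_le G r
  have hhigh := card_filter_le_degree_add_one_lt_of_not_contains G hfree
  simp only [hthreshold, Fintype.card_fin] at hedges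
  set a := #{v | ∑ i, d i + k ≤ G.degree v + 1}
  have ha : (a : ℝ) ≤ k - 1 := by
    rw [le_sub_iff_add_le]; exact_mod_cast hhigh
  have hr : r ≤ n - 2 := by
    simp only [r, sub_le_sub_iff_right]; exact_mod_cast hn
  -- The degree-sum bound is increasing in `a`, since `r ≤ n - 1`.
  nlinarith [mul_nonneg (sub_nonneg.mpr ha) (by linarith : (0 : ℝ) ≤ n - 1 - r)]

theorem stmt5 (k n : ℕ) (hk : 2 ≤ k) (d : Fin k → ℕ)
    (hmono : ∀ i j : Fin k, i ≤ j → d j ≤ d i) (hd : ∀ i, 1 ≤ d i)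
    (hn : ∑ i, d i + k ≤ n)
    (G : SimpleGraph (Fin n)) (hfree : ¬ Contains G (starForest k d)) :
    (G.edgeFinset.card : ℝ) ≤
      (1 / 2) * ((∑ i, (d i : ℝ)) + 2 * k - 3) * n
        - (1 / 2) * ((k : ℝ) - 1) * ((∑ i, (d i : ℝ)) + k - 1) :=
  stmt5_general k n d hn G hfree
end

section
/- Let G be a connected graph, 0 < α < 1, ρ_α = ρ_α(G), and let x = (x_v) be a positive eigenvector of A_α(G) for ρ_α with maximum entry x_w = 1. Then (1-α)·Σ_{uv ∈ E(G)}(x_u + x_v) ≥ ρ_α(ρ_α + 1 - α - α·d(w)) + (1-α)·ρ_α − (1-α)·ρ_α, i.e., Σ_{uv ∈ E(G)}(x_u + x_v) ≥ ρ_α(ρ_α + 1 - α - α·d(w))/(1-α). -/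
open SimpleGraph Matrix Finset

attribute [local instance] Classical.propDecidable

noncomputable def Aalpha (α : ℝ) {V : Type*} [Fintype V] [DecidableEq V]
    (G : SimpleGraph V) [DecidableRel G.Adj] : Matrix V V ℝ :=
  α • Matrix.diagonal (fun v => (G.degree v : ℝ)) + (1 - α) • (G.adjMatrix ℝ)

noncomputable def rhoAlpha (α : ℝ) {V : Type*} [Fintype V] [DecidableEq V]
    (G : SimpleGraph V) [DecidableRel G.Adj] : ℝ :=
  sSup (spectrum ℝ (Aalpha α G))

/-!
Summing the eigenvalue equation over all vertices gives `∑ d(v) x_v = ρ ∑ x_v`, because every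
column of `A_α` sums to the degree; the left side is the edge sum. The equation at `w` reads
`ρ = α d(w) + (1 - α) ∑_{u ~ w} x_u`, and `∑ x_v ≥ x_w + ∑_{u ~ w} x_u` since `x > 0`.
-/

namespace SimpleGraph

variable {V M : Type*} [Fintype V] [DecidableEq V] [AddCommMonoid M]
  (G : SimpleGraph V) [DecidableRel G.Adj]

theorem sum_dart_fst_eq_sum_degree_smul (f : V → M) :
    ∑ d : G.Dart, f d.fst = ∑ v, G.degree v • f v := by
  rw [← sum_fiberwise univ (fun d : G.Dart => d.fst)]
  refine sum_congr rfl fun v _ => ?_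
  rw [sum_congr rfl fun d hd => congrArg f (mem_filter.mp hd).2, sum_const,
    G.dart_fst_fiber_card_eq_degree]

theorem sum_edgeFinset_lift_add_eq_sum_dart_fst (f : V → M) :
    ∑ e ∈ G.edgeFinset, Sym2.lift ⟨fun u v => f u + f v, fun _ _ => add_comm _ _⟩ e =
      ∑ d : G.Dart, f d.fst := by
  rw [← sum_fiberwise_of_maps_to (t := G.edgeFinset) (g := Dart.edge)
    (fun d _ => mem_edgeFinset.mpr d.edge_mem)]
  refine sum_congr rfl fun e he => ?_
  induction e with
  | _ u v =>
    let d : G.Dart := ⟨(u, v), mem_edgeFinset.mp he⟩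
    have hfiber : ({d' | d'.edge = s(u, v)} : Finset G.Dart) = {d, d.symm} := d.edge_fiber
    rw [hfiber, sum_pair d.symm_ne.symm]
    rfl

theorem sum_edgeFinset_lift_add (f : V → M) :
    ∑ e ∈ G.edgeFinset, Sym2.lift ⟨fun u v => f u + f v, fun _ _ => add_comm _ _⟩ e =
      ∑ v, G.degree v • f v := by
  rw [sum_edgeFinset_lift_add_eq_sum_dart_fst, sum_dart_fst_eq_sum_degree_smul]

end SimpleGraph

section Aalpha

variable {V : Type*} [Fintype V] [DecidableEq V] (α : ℝ) (G : SimpleGraph V) [DecidableRel G.Adj]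

theorem Aalpha_mulVec_apply (x : V → ℝ) (v : V) :
    (Aalpha α G *ᵥ x) v = α * G.degree v * x v + (1 - α) * ∑ u ∈ G.neighborFinset v, x u := by
  simp only [Aalpha, add_mulVec, smul_mulVec, mulVec_diagonal, adjMatrix_mulVec_apply,
    Pi.add_apply, Pi.smul_apply, smul_eq_mul, mul_assoc]

theorem one_vecMul_Aalpha : 1 ᵥ* Aalpha α G = fun v => (G.degree v : ℝ) := by
  ext v
  simp only [Aalpha, vecMul_add, vecMul_smul, vecMul_diagonal, adjMatrix_vecMul_apply,
    Pi.add_apply, Pi.smul_apply, Pi.one_apply, smul_eq_mul, one_mul, sum_const,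
    card_neighborFinset_eq_degree, nsmul_eq_mul, mul_one]
  ring

theorem sum_degree_mul_eq_of_Aalpha_mulVec_eq {ρ : ℝ} {x : V → ℝ}
    (heig : Aalpha α G *ᵥ x = ρ • x) :
    ∑ v, (G.degree v : ℝ) * x v = ρ * ∑ v, x v := by
  calc ∑ v, (G.degree v : ℝ) * x v = (1 ᵥ* Aalpha α G) ⬝ᵥ x := by
        rw [one_vecMul_Aalpha]; rfl
    _ = 1 ⬝ᵥ (ρ • x) := by rw [← dotProduct_mulVec, heig]
    _ = ρ * ∑ v, x v := by simp [dotProduct, mul_sum]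

end Aalpha

theorem stmt9 {n : ℕ} (α : ℝ) (hα0 : 0 < α) (hα1 : α < 1)
    (G : SimpleGraph (Fin n))
    (x : Fin n → ℝ) (hpos : ∀ v, 0 < x v)
    (heig : (Aalpha α G) *ᵥ x = rhoAlpha α G • x)
    (w : Fin n) (hw : x w = 1) :
    ∑ e ∈ G.edgeFinset, Sym2.lift ⟨fun u v => x u + x v, fun _ _ => by ring⟩ e ≥
      rhoAlpha α G * (rhoAlpha α G + 1 - α - α * G.degree w) / (1 - α) := by
  set ρ := rhoAlpha α G
  set N := ∑ u ∈ G.neighborFinset w, x u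
  have hrow : α * G.degree w + (1 - α) * N = ρ := by
    simpa [Aalpha_mulVec_apply, hw] using congrFun heig w
  have h1α : 0 < 1 - α := by linarith
  have hN : 0 ≤ N := sum_nonneg fun u _ => (hpos u).le
  have hρ : 0 ≤ ρ := hrow ▸ add_nonneg (by positivity) (mul_nonneg h1α.le hN)
  have hsum : 1 + N ≤ ∑ v, x v := by
    rw [← hw, ← sum_insert (G.notMem_neighborFinset_self w)]
    exact sum_le_sum_of_subset_of_nonneg (subset_univ _) fun v _ _ => (hpos v).le
  rw [ge_iff_le, div_le_iff₀ h1α, G.sum_edgeFinset_lift_add x]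
  simp only [nsmul_eq_mul]
  rw [sum_degree_mul_eq_of_Aalpha_mulVec_eq α G heig]
  calc ρ * (ρ + 1 - α - α * G.degree w) = (1 - α) * (ρ * (1 + N)) := by rw [← hrow]; ring
    _ ≤ (1 - α) * (ρ * ∑ v, x v) := by gcongr
    _ = (ρ * ∑ v, x v) * (1 - α) := by ring
end

section
/- Let t ≥ s ≥ 2, 0 < α < 1, and n - s + 1 = pt for a positive integer p. Then for G = K_{s-1} ∇ (pK_t), the α-index ρ_α(G) equals the largest root of f_α(x) = x² - (αn + s + t - 3)x + (α(n-s+1) + s - 2)(α(s-1) + t - 1) - (1-α)²(s-1)(n-s+1) = 0. -/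
open SimpleGraph Matrix

attribute [local instance] Classical.propDecidable

/-- The join `G ∇ H`: every vertex of `G` is joined to every vertex of `H`. -/
def joinGraph {V W : Type*} (G : SimpleGraph V) (H : SimpleGraph W) :
    SimpleGraph (V ⊕ W) where
  Adj x y :=
    match x, y with
    | Sum.inl a, Sum.inl b => G.Adj a b
    | Sum.inr a, Sum.inr b => H.Adj a b
    | Sum.inl _, Sum.inr _ => True
    | Sum.inr _, Sum.inl _ => True
  symm := ⟨by rintro (a | a) (b | b) h <;> simp_all [SimpleGraph.adj_comm]⟩
  loopless := ⟨by rintro (a | a) h <;> simp_all⟩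

/-- `p` disjoint copies of `K_t`. -/
def disjointCopiesComplete (p t : ℕ) : SimpleGraph (Fin p × Fin t) where
  Adj x y := x.1 = y.1 ∧ x.2 ≠ y.2
  symm := ⟨by rintro x y ⟨h1, h2⟩; exact ⟨h1.symm, h2.symm⟩⟩
  loopless := ⟨by rintro x ⟨_, h⟩; exact h rfl⟩

/-! For regular `G` and `H`, `A_α(G ∇ H)` maps vectors that are constant on each side of the
join to such vectors, acting there as a `2 × 2` matrix whose characteristic polynomial is `f_α`.
The larger root of `f_α` has a positive eigenvector of this quotient matrix, which lifts to a
positive eigenvector of `A_α`. For an entrywise nonnegative matrix, an eigenvalue with a positive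
eigenvector bounds the absolute value of every real eigenvalue, so that root is `ρ_α`; every
other root of `f_α` is an eigenvalue as well, hence at most `ρ_α`. -/

theorem Matrix.mem_spectrum_iff_exists_mulVec_eq_smul {K n : Type*} [Field K] [Fintype n]
    [DecidableEq n] (M : Matrix n n K) (μ : K) :
    μ ∈ spectrum K M ↔ ∃ v ≠ 0, M *ᵥ v = μ • v := by
  rw [← Matrix.spectrum_toLin', ← Module.End.hasEigenvalue_iff_mem_spectrum,
    Module.End.hasEigenvalue_iff, Submodule.ne_bot_iff]
  simp only [Module.End.mem_eigenspace_iff, Matrix.toLin'_apply]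
  tauto

section PositiveEigenvector

variable {n : Type*} [Fintype n] [DecidableEq n] {M : Matrix n n ℝ} {w : n → ℝ} {r : ℝ}

theorem Matrix.abs_le_of_mem_spectrum_of_pos_eigenvector (hM : ∀ i j, 0 ≤ M i j)
    (hw : ∀ i, 0 < w i) (hMw : M *ᵥ w = r • w) {x : ℝ} (hx : x ∈ spectrum ℝ M) :
    |x| ≤ r := by
  obtain ⟨v, hv0, hMv⟩ := (M.mem_spectrum_iff_exists_mulVec_eq_smul x).mp hx
  obtain ⟨j, hj⟩ := Function.ne_iff.mp hv0
  -- compare `|v|` with the multiple `c • w` of `w` that touches it at `i`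
  obtain ⟨i, -, hi⟩ := Finset.exists_max_image Finset.univ (fun j => |v j| / w j)
    ⟨j, Finset.mem_univ j⟩
  set c := |v i| / w i
  have hv_le : ∀ j, |v j| ≤ c * w j := fun j =>
    (div_le_iff₀ (hw j)).mp (hi j (Finset.mem_univ j))
  have hci : c * w i = |v i| := div_mul_cancel₀ _ (hw i).ne'
  have hvi : 0 < |v i| := by
    have := (div_pos (abs_pos.mpr hj) (hw j)).trans_le (hi j (Finset.mem_univ j))
    exact hci ▸ mul_pos this (hw i)
  have key : |x| * |v i| ≤ r * |v i| := calc
    |x| * |v i| = |∑ j, M i j * v j| := by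
        rw [← abs_mul, ← smul_eq_mul, ← Pi.smul_apply, ← hMv]; rfl
    _ ≤ ∑ j, M i j * (c * w j) := by
        refine (Finset.abs_sum_le_sum_abs _ _).trans (Finset.sum_le_sum fun j _ => ?_)
        rw [abs_mul, abs_of_nonneg (hM i j)]
        exact mul_le_mul_of_nonneg_left (hv_le j) (hM i j)
    _ = c * (M *ᵥ w) i := by
        simp only [mulVec, dotProduct, Finset.mul_sum]
        exact Finset.sum_congr rfl fun j _ => by ring
    _ = r * |v i| := by rw [hMw, Pi.smul_apply, smul_eq_mul, ← hci]; ring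
  exact le_of_mul_le_mul_right key hvi

theorem Matrix.sSup_spectrum_eq_of_pos_eigenvector [Nonempty n] (hM : ∀ i j, 0 ≤ M i j)
    (hw : ∀ i, 0 < w i) (hMw : M *ᵥ w = r • w) : sSup (spectrum ℝ M) = r := by
  have hr : r ∈ spectrum ℝ M := (M.mem_spectrum_iff_exists_mulVec_eq_smul r).mpr
    ⟨w, fun h => (hw (Classical.arbitrary n)).ne' (congrFun h _), hMw⟩
  have hle : ∀ x ∈ spectrum ℝ M, x ≤ r := fun x hx =>
    (le_abs_self x).trans (abs_le_of_mem_spectrum_of_pos_eigenvector hM hw hMw hx)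
  exact le_antisymm (csSup_le ⟨r, hr⟩ hle) (le_csSup ⟨r, hle⟩ hr)

end PositiveEigenvector

theorem exists_lt_and_sub_mul_sub_eq (d₁ d₂ c : ℝ) (hc : 0 < c) :
    ∃ r, d₁ < r ∧ (r - d₁) * (r - d₂) = c := by
  set D := (d₁ - d₂) ^ 2 + 4 * c
  have hD : Real.sqrt D ^ 2 = D := Real.sq_sqrt (by positivity)
  have hlt : d₁ - d₂ < Real.sqrt D := calc
    d₁ - d₂ ≤ |d₁ - d₂| := le_abs_self _
    _ = Real.sqrt ((d₁ - d₂) ^ 2) := (Real.sqrt_sq_eq_abs _).symm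
    _ < Real.sqrt D := Real.sqrt_lt_sqrt (sq_nonneg _) (by linarith)
  exact ⟨(d₁ + d₂ + Real.sqrt D) / 2, by linarith, by linear_combination hD / 4⟩

theorem Aalpha_nonneg {α : ℝ} (hα0 : 0 ≤ α) (hα1 : α ≤ 1) {V : Type*} [Fintype V]
    [DecidableEq V] (G : SimpleGraph V) [DecidableRel G.Adj] (i j : V) :
    0 ≤ Aalpha α G i j := by
  have : 0 ≤ 1 - α := sub_nonneg.mpr hα1
  simp only [Aalpha, Matrix.add_apply, Matrix.smul_apply, diagonal_apply, adjMatrix_apply,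
    smul_eq_mul]
  split_ifs <;> positivity

theorem disjointCopiesComplete_isRegularOfDegree (p t : ℕ)
    [DecidableRel (disjointCopiesComplete p t).Adj] :
    (disjointCopiesComplete p t).IsRegularOfDegree (t - 1) := by
  intro v
  have : (disjointCopiesComplete p t).neighborFinset v = {v.1} ×ˢ Finset.univ.erase v.2 := by
    ext ⟨i, j⟩
    rw [mem_neighborFinset, Finset.mem_product, Finset.mem_singleton, Finset.mem_erase]
    simp [disjointCopiesComplete, eq_comm]
  rw [← card_neighborFinset_eq_degree, this, Finset.card_product, Finset.card_singleton,
    Finset.card_erase_of_mem (Finset.mem_univ _), Finset.card_univ, Fintype.card_fin, one_mul]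

section Join

variable {V W : Type*} (G : SimpleGraph V) (H : SimpleGraph W)

@[simp] theorem joinGraph_adj_inl_inl {a b : V} :
    (joinGraph G H).Adj (Sum.inl a) (Sum.inl b) ↔ G.Adj a b := Iff.rfl

@[simp] theorem joinGraph_adj_inr_inr {a b : W} :
    (joinGraph G H).Adj (Sum.inr a) (Sum.inr b) ↔ H.Adj a b := Iff.rfl

@[simp] theorem joinGraph_adj_inl_inr {a : V} {b : W} :
    (joinGraph G H).Adj (Sum.inl a) (Sum.inr b) := trivial

@[simp] theorem joinGraph_adj_inr_inl {a : W} {b : V} :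
    (joinGraph G H).Adj (Sum.inr a) (Sum.inl b) := trivial

variable [Fintype V] [Fintype W] [DecidableRel (joinGraph G H).Adj]

theorem joinGraph_neighborFinset_inl [DecidableRel G.Adj] (v : V) :
    (joinGraph G H).neighborFinset (Sum.inl v) = (G.neighborFinset v).disjSum Finset.univ := by
  ext (u | u) <;> simp

theorem joinGraph_neighborFinset_inr [DecidableRel H.Adj] (w : W) :
    (joinGraph G H).neighborFinset (Sum.inr w) = Finset.univ.disjSum (H.neighborFinset w) := by
  ext (u | u) <;> simp

theorem joinGraph_degree_inl [DecidableRel G.Adj] (v : V) :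
    (joinGraph G H).degree (Sum.inl v) = G.degree v + Fintype.card W := by
  rw [← card_neighborFinset_eq_degree, joinGraph_neighborFinset_inl, Finset.card_disjSum,
    card_neighborFinset_eq_degree, Finset.card_univ]

theorem joinGraph_degree_inr [DecidableRel H.Adj] (w : W) :
    (joinGraph G H).degree (Sum.inr w) = Fintype.card V + H.degree w := by
  rw [← card_neighborFinset_eq_degree, joinGraph_neighborFinset_inr, Finset.card_disjSum,
    card_neighborFinset_eq_degree, Finset.card_univ]

theorem Aalpha_joinGraph_mulVec_elim [DecidableEq V] [DecidableEq W] [DecidableRel G.Adj]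
    [DecidableRel H.Adj] {k l : ℕ}
    (hG : G.IsRegularOfDegree k) (hH : H.IsRegularOfDegree l) (α a b : ℝ) :
    Aalpha α (joinGraph G H) *ᵥ Sum.elim (fun _ => a) (fun _ => b) =
      Sum.elim (fun _ => (k + α * Fintype.card W) * a + (1 - α) * Fintype.card W * b)
        (fun _ => (1 - α) * Fintype.card V * a + (l + α * Fintype.card V) * b) := by
  ext (v | w)
  · simp [Aalpha, add_mulVec, smul_mulVec, mulVec_diagonal, adjMatrix_mulVec_apply,
      joinGraph_neighborFinset_inl, Finset.sum_disjSum, joinGraph_degree_inl, hG v]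
    ring
  · simp [Aalpha, add_mulVec, smul_mulVec, mulVec_diagonal, adjMatrix_mulVec_apply,
      joinGraph_neighborFinset_inr, Finset.sum_disjSum, joinGraph_degree_inr, hH w]
    ring

end Join

theorem rhoAlpha_joinGraph_isGreatest {V W : Type*} [Fintype V] [Fintype W] [DecidableEq V]
    [DecidableEq W] [Nonempty V] [Nonempty W] {G : SimpleGraph V} {H : SimpleGraph W}
    [DecidableRel G.Adj] [DecidableRel H.Adj] [DecidableRel (joinGraph G H).Adj] {k l : ℕ}
    (hG : G.IsRegularOfDegree k) (hH : H.IsRegularOfDegree l) {α : ℝ} (hα0 : 0 ≤ α)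
    (hα1 : α < 1) :
    IsGreatest {x : ℝ | (x - (k + α * Fintype.card W)) * (x - (l + α * Fintype.card V)) =
        (1 - α) ^ 2 * Fintype.card V * Fintype.card W}
      (rhoAlpha α (joinGraph G H)) := by
  have hq : (0 : ℝ) < Fintype.card W := Nat.cast_pos.mpr Fintype.card_pos
  have hc : 0 < (1 - α) * Fintype.card W := mul_pos (sub_pos.mpr hα1) hq
  set w : ℝ → V ⊕ W → ℝ :=
    fun x => Sum.elim (fun _ => (1 - α) * Fintype.card W) (fun _ => x - (k + α * Fintype.card W))
  have heig : ∀ x : ℝ, (x - (k + α * Fintype.card W)) * (x - (l + α * Fintype.card V)) =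
      (1 - α) ^ 2 * Fintype.card V * Fintype.card W →
      Aalpha α (joinGraph G H) *ᵥ w x = x • w x := by
    intro x hx
    rw [Aalpha_joinGraph_mulVec_elim G H hG hH]
    ext (v | v)
    · simp only [Sum.elim_inl, Pi.smul_apply, smul_eq_mul, w]
      ring
    · simp only [Sum.elim_inr, Pi.smul_apply, smul_eq_mul, w]
      linear_combination -hx
  obtain ⟨r, hr, hroot⟩ := exists_lt_and_sub_mul_sub_eq (k + α * Fintype.card W)
    (l + α * Fintype.card V) ((1 - α) ^ 2 * Fintype.card V * Fintype.card W) (by positivity)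
  have hw : ∀ i, 0 < w r i := by
    rintro (v | v)
    exacts [hc, sub_pos.mpr hr]
  have hρ : rhoAlpha α (joinGraph G H) = r := Matrix.sSup_spectrum_eq_of_pos_eigenvector
    (Aalpha_nonneg hα0 hα1.le _) hw (heig r hroot)
  refine ⟨hρ ▸ hroot, fun x hx => ?_⟩
  have hx_mem : x ∈ spectrum ℝ (Aalpha α (joinGraph G H)) :=
    (Matrix.mem_spectrum_iff_exists_mulVec_eq_smul _ x).mpr
      ⟨w x, fun h => hc.ne' (congrFun h (Sum.inl (Classical.arbitrary V))), heig x hx⟩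
  exact hρ ▸ (le_abs_self x).trans (Matrix.abs_le_of_mem_spectrum_of_pos_eigenvector
    (Aalpha_nonneg hα0 hα1.le _) hw (heig r hroot) hx_mem)

theorem stmt12_general (α : ℝ) (s t n p : ℕ) (hα0 : 0 < α) (hα1 : α < 1)
    (hs : 2 ≤ s) (hn : n - s + 1 = p * t) (hns : s ≤ n) :
    (rhoAlpha α (joinGraph (completeGraph (Fin (s - 1))) (disjointCopiesComplete p t))) ^ 2
        - (α * n + s + t - 3) *
          rhoAlpha α (joinGraph (completeGraph (Fin (s - 1))) (disjointCopiesComplete p t))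
        + (α * ((n : ℝ) - s + 1) + s - 2) * (α * ((s : ℝ) - 1) + t - 1)
        - (1 - α) ^ 2 * ((s : ℝ) - 1) * ((n : ℝ) - s + 1) = 0 ∧
    ∀ x : ℝ, x ^ 2 - (α * n + s + t - 3) * x
        + (α * ((n : ℝ) - s + 1) + s - 2) * (α * ((s : ℝ) - 1) + t - 1)
        - (1 - α) ^ 2 * ((s : ℝ) - 1) * ((n : ℝ) - s + 1) = 0 →
      x ≤ rhoAlpha α (joinGraph (completeGraph (Fin (s - 1))) (disjointCopiesComplete p t)) := by
  have hpt : 0 < p * t := by omega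
  have : Nonempty (Fin (s - 1)) := ⟨⟨0, by omega⟩⟩
  have : Nonempty (Fin p × Fin t) :=
    ⟨⟨0, Nat.pos_of_mul_pos_right hpt⟩, ⟨0, Nat.pos_of_mul_pos_left hpt⟩⟩
  obtain ⟨hρ, hmax⟩ := rhoAlpha_joinGraph_isGreatest (IsRegularOfDegree.top (V := Fin (s - 1)))
    (disjointCopiesComplete_isRegularOfDegree p t) hα0.le hα1
  simp only [Fintype.card_fin, Fintype.card_prod] at hρ hmax
  have hk : ((s - 1 - 1 : ℕ) : ℝ) = s - 2 := by
    rw [Nat.sub_sub, Nat.cast_sub hs]; norm_num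
  have hm : ((s - 1 : ℕ) : ℝ) = s - 1 := by rw [Nat.cast_sub (by omega), Nat.cast_one]
  have hl : ((t - 1 : ℕ) : ℝ) = t - 1 := by
    rw [Nat.cast_sub (Nat.pos_of_mul_pos_left hpt), Nat.cast_one]
  have hq : ((p * t : ℕ) : ℝ) = n - s + 1 := by
    rw [← hn, Nat.cast_add, Nat.cast_sub hns, Nat.cast_one]
  rw [hk, hm, hl, hq, Set.mem_ofPred_eq] at hρ
  rw [hk, hm, hl, hq] at hmax
  exact ⟨by linear_combination hρ, fun x hx => hmax (show _ = _ by linear_combination hx)⟩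

theorem stmt12 (α : ℝ) (s t n p : ℕ) (hα0 : 0 < α) (hα1 : α < 1)
    (hs : 2 ≤ s) (hst : s ≤ t) (hp : 1 ≤ p) (hn : n - s + 1 = p * t) (hns : s ≤ n) :
    (rhoAlpha α (joinGraph (completeGraph (Fin (s - 1))) (disjointCopiesComplete p t))) ^ 2
        - (α * n + s + t - 3) *
          rhoAlpha α (joinGraph (completeGraph (Fin (s - 1))) (disjointCopiesComplete p t))
        + (α * ((n : ℝ) - s + 1) + s - 2) * (α * ((s : ℝ) - 1) + t - 1)
        - (1 - α) ^ 2 * ((s : ℝ) - 1) * ((n : ℝ) - s + 1) = 0 ∧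
    ∀ x : ℝ, x ^ 2 - (α * n + s + t - 3) * x
        + (α * ((n : ℝ) - s + 1) + s - 2) * (α * ((s : ℝ) - 1) + t - 1)
        - (1 - α) ^ 2 * ((s : ℝ) - 1) * ((n : ℝ) - s + 1) = 0 →
      x ≤ rhoAlpha α (joinGraph (completeGraph (Fin (s - 1))) (disjointCopiesComplete p t)) :=
  stmt12_general α s t n p hα0 hα1 hs hn hns
end

section
/- Let t ≥ s ≥ 2. The graph K_{s-1} ∇ (pK_t), the join of a complete graph on s-1 vertices with p disjoint copies of K_t, is K_{s,t} minor-free. -/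
/-!
The branch sets of a `K_{s,t}`-model are disjoint, so at most `s - 1 < s ≤ t` of them contain
an apex, and some branch set on each side avoids the apices. An apex-free branch set is
connected, hence lies in one copy of `K_t`, and two adjacent ones lie in the same copy; as every
two branch sets on opposite sides are adjacent, all apex-free branch sets lie in one common
copy. So each of the `s + t` disjoint branch sets meets either the `s - 1` apices or that copy
of `K_t`, which is too few vertices.
-/

open SimpleGraph

/-- `H` is a minor of `G`: pairwise disjoint connected (hence nonempty) branch sets,
one for each vertex of `H`, with an edge of `G` between the branch sets of any two
adjacent vertices of `H`. -/
def IsMinor {W V : Type*} (H : SimpleGraph W) (G : SimpleGraph V) : Prop :=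
  ∃ f : W → Set V,
    (Pairwise fun w₁ w₂ => Disjoint (f w₁) (f w₂)) ∧
    (∀ w, (G.induce (f w)).Connected) ∧
    (∀ ⦃w₁ w₂⦄, H.Adj w₁ w₂ → ∃ u ∈ f w₁, ∃ v ∈ f w₂, G.Adj u v)

theorem SimpleGraph.Walk.apply_eq_of_forall_adj {V β : Type*} {G : SimpleGraph V} {f : V → β}
    (hf : ∀ ⦃x y⦄, G.Adj x y → f x = f y) {u v : V} (w : G.Walk u v) : f u = f v := by
  induction w with
  | nil => rfl
  | cons h _ ih => exact (hf h).trans ih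

theorem SimpleGraph.Preconnected.apply_eq_of_forall_adj {V β : Type*} {G : SimpleGraph V}
    {f : V → β} (hG : G.Preconnected) (hf : ∀ ⦃x y⦄, G.Adj x y → f x = f y) (u v : V) :
    f u = f v :=
  (hG u v).elim (·.apply_eq_of_forall_adj hf)

theorem Set.Nonempty.exists_inr_mem {α β : Type*} {S : Set (α ⊕ β)} (hS : S.Nonempty)
    (hl : ∀ a, Sum.inl a ∉ S) : ∃ b, Sum.inr b ∈ S := by
  obtain ⟨a | b, hx⟩ := hS
  · exact absurd hx (hl a)
  · exact ⟨b, hx⟩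

theorem Fintype.card_le_of_pairwise_disjoint {ι κ V : Type*} [Fintype ι] [Fintype κ]
    {f : ι → Set V} (hf : Pairwise fun i j => Disjoint (f i) (f j)) (e : κ → V)
    (he : ∀ i, ∃ k, e k ∈ f i) :
    Fintype.card ι ≤ Fintype.card κ := by
  choose c hc using he
  refine Fintype.card_le_of_injective c fun i i' hii' => ?_
  by_contra hne
  exact Set.disjoint_left.mp (hf hne) (hc i) (hii' ▸ hc i')

namespace joinGraph

variable {V W β : Type*} {G : SimpleGraph V} {H : SimpleGraph W} {g : W → β}

theorem apply_eq_of_induce_preconnected (hg : ∀ ⦃x y⦄, H.Adj x y → g x = g y)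
    {S : Set (V ⊕ W)} (hS : ∀ a, Sum.inl a ∉ S)
    (hSc : ((joinGraph G H).induce S).Preconnected)
    {b c : W} (hb : Sum.inr b ∈ S) (hc : Sum.inr c ∈ S) : g b = g c := by
  let copy : S → Option β := fun x => Sum.elim (fun _ => none) (fun b => some (g b)) x.1
  have hcopy : ∀ ⦃x y⦄, ((joinGraph G H).induce S).Adj x y → copy x = copy y := by
    rintro ⟨x | x, hx⟩ ⟨y | y, hy⟩ hxy
    · exact absurd hx (hS x)
    · exact absurd hx (hS x)
    · exact absurd hy (hS y)
    · exact congrArg some (hg hxy)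
  exact Option.some_injective _ (hSc.apply_eq_of_forall_adj hcopy ⟨_, hb⟩ ⟨_, hc⟩)

theorem apply_eq_of_adj_induce_preconnected (hg : ∀ ⦃x y⦄, H.Adj x y → g x = g y)
    {S T : Set (V ⊕ W)} (hS : ∀ a, Sum.inl a ∉ S) (hT : ∀ a, Sum.inl a ∉ T)
    (hSc : ((joinGraph G H).induce S).Preconnected) (hTc : ((joinGraph G H).induce T).Preconnected)
    (hST : ∃ u ∈ S, ∃ v ∈ T, (joinGraph G H).Adj u v) {b c : W}
    (hb : Sum.inr b ∈ S) (hc : Sum.inr c ∈ T) : g b = g c := by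
  obtain ⟨u | u, hu, v | v, hv, huv⟩ := hST
  · exact absurd hu (hS u)
  · exact absurd hu (hS u)
  · exact absurd hv (hT v)
  · calc g b = g u := apply_eq_of_induce_preconnected hg hS hSc hb hu
      _ = g v := hg huv
      _ = g c := apply_eq_of_induce_preconnected hg hT hTc hv hc

end joinGraph

theorem not_isMinor_completeBipartiteGraph_joinGraph {V : Type*} [Fintype V] (G : SimpleGraph V)
    {s t : ℕ} (p : ℕ) (hV : Fintype.card V < s) (hst : s ≤ t) :
    ¬ IsMinor (completeBipartiteGraph (Fin s) (Fin t))
      (joinGraph G (disjointCopiesComplete p t)) := by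
  rintro ⟨f, hdisj, hconn, hadj⟩
  have hne (w) : (f w).Nonempty := Set.nonempty_coe_sort.mp (hconn w).nonempty
  have hcopy (w w') (hw : ∀ a, Sum.inl a ∉ f w) (hw' : ∀ a, Sum.inl a ∉ f w')
      (hww' : (completeBipartiteGraph (Fin s) (Fin t)).Adj w w') {b c} (hb : Sum.inr b ∈ f w)
      (hc : Sum.inr c ∈ f w') : b.1 = c.1 :=
    joinGraph.apply_eq_of_adj_induce_preconnected (g := Prod.fst)
      (fun _ _ (h : (disjointCopiesComplete p t).Adj _ _) => h.1) hw hw'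
      (hconn w).preconnected (hconn w').preconnected (hadj hww') hb hc
  have few_apex_sets {ι : Type} [Fintype ι] (e : ι → Fin s ⊕ Fin t) (he : e.Injective)
      (hapex : ∀ i, ∃ a, Sum.inl a ∈ f (e i)) : Fintype.card ι ≤ Fintype.card V :=
    Fintype.card_le_of_pairwise_disjoint (hdisj.comp_of_injective he) Sum.inl hapex
  obtain ⟨i₀, hi₀⟩ : ∃ i, ∀ a, Sum.inl a ∉ f (Sum.inl i) := by
    by_contra! h
    have := few_apex_sets Sum.inl Sum.inl_injective h
    simp only [Fintype.card_fin] at this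
    omega
  obtain ⟨j₀, hj₀⟩ : ∃ j, ∀ a, Sum.inl a ∉ f (Sum.inr j) := by
    by_contra! h
    have := few_apex_sets Sum.inr Sum.inr_injective h
    simp only [Fintype.card_fin] at this
    omega
  obtain ⟨b₀, hb₀⟩ := (hne _).exists_inr_mem hi₀
  obtain ⟨c₀, hc₀⟩ := (hne _).exists_inr_mem hj₀
  have hsame (w) (hw : ∀ a, Sum.inl a ∉ f w) (b) (hb : Sum.inr b ∈ f w) : b.1 = b₀.1 := by
    rcases w with _ | _
    · rw [hcopy _ _ hw hj₀ (by simp) hb hc₀, hcopy _ _ hi₀ hj₀ (by simp) hb₀ hc₀]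
    · exact (hcopy _ _ hi₀ hw (by simp) hb₀ hb).symm
  have := Fintype.card_le_of_pairwise_disjoint hdisj
    (Sum.elim Sum.inl fun j => Sum.inr (b₀.1, j)) fun w => by
      by_cases hw : ∀ a, Sum.inl a ∉ f w
      · obtain ⟨b, hb⟩ := (hne w).exists_inr_mem hw
        exact ⟨Sum.inr b.2, by simpa [← hsame w hw b hb] using hb⟩
      · obtain ⟨a, ha⟩ := not_forall_not.mp hw
        exact ⟨Sum.inl a, ha⟩
  simp only [Fintype.card_sum, Fintype.card_fin] at this
  omega

theorem stmt13 (s t p : ℕ) (hs : 2 ≤ s) (hst : s ≤ t) :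
    ¬ IsMinor (completeBipartiteGraph (Fin s) (Fin t))
        (joinGraph (completeGraph (Fin (s - 1))) (disjointCopiesComplete p t)) :=
  not_isMinor_completeBipartiteGraph_joinGraph _ p (by simp only [Fintype.card_fin]; omega) hst
end

section
/- Let r ≥ 3. The graph K_{r-2} ∇ \overline{K}_{n-r+2} (complete split graph: a clique of size r-2 joined to an independent set of size n-r+2) is K_r minor-free. -/
open SimpleGraph

/-- `K_k ∇ K̄_{n-k}` on `Fin n`: the first `k` vertices form a dominating clique. -/
def completeSplit (n k : ℕ) : SimpleGraph (Fin n) where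
  Adj u v := u ≠ v ∧ ((u : ℕ) < k ∨ (v : ℕ) < k)
  symm := ⟨by rintro u v ⟨h1, h2⟩; exact ⟨h1.symm, h2.symm⟩⟩
  loopless := ⟨by rintro u ⟨h1, _⟩; exact h1 rfl⟩

/-!
Let `S` be a vertex cover of `G`. Among the branch sets of a `K_m`-minor, those meeting `S`
are disjoint, so there are at most `|S|` of them; two branch sets avoiding `S` could not be
joined by an edge, so at most one does. Hence `m ≤ |S| + 1`, and the first `r - 2` vertices
cover every edge of `K_{r-2} ∇ K̄_{n-r+2}`.
-/

open Finset

theorem IsMinor.card_le_card_add_one_of_forall_adj_mem {W V : Type*} [Fintype W]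
    {G : SimpleGraph V} (S : Finset V) (hS : ∀ ⦃u v⦄, G.Adj u v → u ∈ S ∨ v ∈ S)
    (h : IsMinor (completeGraph W) G) : Fintype.card W ≤ #S + 1 := by
  classical
  obtain ⟨f, hdisj, -, hadj⟩ := h
  set T : Finset W := {w | ∃ v ∈ S, v ∈ f w}
  have hT : #T ≤ #S :=
    card_le_card_of_forall_subsingleton (fun w v => v ∈ f w) (fun w hw => (mem_filter.1 hw).2)
      fun v _ w₁ hw₁ w₂ hw₂ => by_contra fun hne => (hdisj hne).ne_of_mem hw₁.2 hw₂.2 rfl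
  have hTc : #Tᶜ ≤ 1 := by
    refine card_le_one.2 fun a ha b hb => by_contra fun hab => ?_
    obtain ⟨u, hu, v, hv, huv⟩ := hadj hab
    simp only [T, mem_compl, mem_filter, mem_univ, true_and, not_exists, not_and] at ha hb
    rcases hS huv with huS | hvS
    exacts [ha u huS hu, hb v hvS hv]
  rw [← card_add_card_compl T]
  omega

theorem stmt15 (r n : ℕ) (hr : 3 ≤ r) :
    ¬ IsMinor (completeGraph (Fin r)) (completeSplit n (r - 2)) := by
  intro h
  have hbound := h.card_le_card_add_one_of_forall_adj_mem {v : Fin n | (v : ℕ) < r - 2}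
    fun u v huv => by simpa using huv.2
  rw [Fintype.card_fin, Fin.card_filter_val_lt] at hbound
  omega
end
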